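/- arXiv:1705.02767 — 2 statements merged into one kernel-verified Lean document; each statement's English description precedes it below -/
import Mathlib

section
/- Let A be an arrangement in K^ℓ, H_0 ∈ A with H_0 = ker(α_0), m_0 ≥ 1, and let δ be the multiplicity with δ(H_0) = m_0 and δ(H) = 1 otherwise. Suppose (A, δ) is free with exponents {m_0, e_2, ..., e_ℓ}. Then the simple arrangement A is free with exponents {1, e_2, ..., e_ℓ}. -/
open MvPolynomial

open scoped Classical

noncomputable section

/-- A (polynomial) derivation on `K[x_1,...,x_n]`, given by its coefficient
vector: `θ` represents `∑ i, θ i * ∂/∂ x i`. -/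
abbrev MvDer (n : ℕ) (K : Type*) [Field K] : Type _ := Fin n → MvPolynomial (Fin n) K

/-- Application of a derivation (given by its coefficient vector) to a polynomial,
as a linear map over the polynomial ring. -/
def derAppL {K : Type*} [Field K] {n : ℕ} (f : MvPolynomial (Fin n) K) :
    MvDer n K →ₗ[MvPolynomial (Fin n) K] MvPolynomial (Fin n) K where
  toFun θ := ∑ i, θ i * MvPolynomial.pderiv i f
  map_add' θ₁ θ₂ := by
    simp [add_mul, Finset.sum_add_distrib]
  map_smul' c θ := by
    simp [Finset.mul_sum, smul_eq_mul, mul_assoc]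

/-- The module of derivations `D(A, μ)` of the multiarrangement with defining linear
forms `A` and multiplicity function `μ`:
`D(A,μ) = {θ : θ(α) ∈ α^(μ α) · S for all α ∈ A}`. -/
def Dmod {K : Type*} [Field K] {n : ℕ} (A : Finset (MvPolynomial (Fin n) K))
    (μ : MvPolynomial (Fin n) K → ℕ) :
    Submodule (MvPolynomial (Fin n) K) (MvDer n K) :=
  ⨅ α ∈ A, Submodule.comap (derAppL α) (Ideal.span {α ^ μ α})

/-- The module of derivations of a multiarrangement given as a finite set of
(form, multiplicity) pairs. -/
def DmodP {K : Type*} [Field K] {n : ℕ} (P : Finset (MvPolynomial (Fin n) K × ℕ)) :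
    Submodule (MvPolynomial (Fin n) K) (MvDer n K) :=
  ⨅ p ∈ P, Submodule.comap (derAppL p.1) (Ideal.span {p.1 ^ p.2})

/-- A derivation is homogeneous of polynomial degree `d` if all its coefficient
polynomials are homogeneous of degree `d`. -/
def IsHomogDer {K : Type*} [Field K] {n : ℕ} (θ : MvDer n K) (d : ℕ) : Prop :=
  ∀ i, (θ i).IsHomogeneous d

/-- `θ` is a basis of the submodule `D` of the module of derivations. -/
def IsBasisOf {K : Type*} [Field K] {n : ℕ} (θ : Fin n → MvDer n K)
    (D : Submodule (MvPolynomial (Fin n) K) (MvDer n K)) : Prop :=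
  (∀ i, θ i ∈ D) ∧ LinearIndependent (MvPolynomial (Fin n) K) θ ∧
    Submodule.span (MvPolynomial (Fin n) K) (Set.range θ) = D

/-- `D` is a free module with a homogeneous basis of degrees `e 0, ..., e (n-1)`. -/
def FreeWithExps {K : Type*} [Field K] {n : ℕ}
    (D : Submodule (MvPolynomial (Fin n) K) (MvDer n K)) (e : Fin n → ℕ) : Prop :=
  ∃ θ : Fin n → MvDer n K, IsBasisOf θ D ∧ ∀ i, IsHomogDer (θ i) (e i)

/-- `D` is a free module with a homogeneous basis whose multiset of degrees is `E`. -/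
def FreeWithExpM {K : Type*} [Field K] {n : ℕ}
    (D : Submodule (MvPolynomial (Fin n) K) (MvDer n K)) (E : Multiset ℕ) : Prop :=
  ∃ (θ : Fin n → MvDer n K) (d : Fin n → ℕ), IsBasisOf θ D ∧
    (∀ i, IsHomogDer (θ i) (d i)) ∧ Multiset.map d Finset.univ.val = E

/-- The zero set (kernel) of the linear form given by the polynomial `α`. -/
def kerV {K : Type*} [Field K] {n : ℕ} (α : MvPolynomial (Fin n) K) : Set (Fin n → K) :=
  {v | MvPolynomial.eval v α = 0}

/-- Pull back a polynomial along a linear embedding `ι : K^m → K^n`; for a linear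
form `α` this is the restriction of `α` to the image of `ι`, expressed in the
coordinates of `K^m`. -/
def restrictForm {K : Type*} [Field K] {m n : ℕ} (ι : (Fin m → K) →ₗ[K] (Fin n → K))
    (α : MvPolynomial (Fin n) K) : MvPolynomial (Fin m) K :=
  MvPolynomial.aeval
    (fun i : Fin n => ∑ j : Fin m, MvPolynomial.C (ι (Pi.single j 1) i) * MvPolynomial.X j) α

/-- `A''` is (a set of defining forms for) the restriction of the arrangement `A`
to the hyperplane `H₀ = ker α₀`, where `ι` is a linear parametrization of `H₀`:
the elements of `A''` are nonzero linear forms with pairwise distinct kernels,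
whose kernels are exactly the intersections `H ∩ H₀` for `H ∈ A \ {H₀}`. -/
def IsRestriction {K : Type*} [Field K] {m n : ℕ} (A : Finset (MvPolynomial (Fin n) K))
    (α₀ : MvPolynomial (Fin n) K) (ι : (Fin m → K) →ₗ[K] (Fin n → K))
    (A'' : Finset (MvPolynomial (Fin m) K)) : Prop :=
  (∀ β ∈ A'', β.IsHomogeneous 1 ∧ β ≠ 0) ∧
  (∀ β₁ ∈ A'', ∀ β₂ ∈ A'', kerV β₁ = kerV β₂ → β₁ = β₂) ∧
  (∀ α ∈ A, α ≠ α₀ → ∃ β ∈ A'', kerV β = kerV (restrictForm ι α)) ∧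
  (∀ β ∈ A'', ∃ α ∈ A, α ≠ α₀ ∧ kerV β = kerV (restrictForm ι α))

/-- Ziegler's canonical multiplicity: for a hyperplane `Y = ker β` of the
restriction, `κ(Y) = |A_Y| - 1`, the number of hyperplanes of `A` (other than
`H₀`) lying above `Y`. -/
def zieglerMult {K : Type*} [Field K] {m n : ℕ} (A : Finset (MvPolynomial (Fin n) K))
    (ι : (Fin m → K) →ₗ[K] (Fin n → K)) (β : MvPolynomial (Fin m) K) : ℕ :=
  ({α : MvPolynomial (Fin n) K |
      α ∈ A ∧ ∀ w ∈ kerV β, MvPolynomial.eval (ι w) α = 0}).ncard - 1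

end

/-! The Euler derivation satisfies `θ_E(α) = α` for every linear form `α`, so
`α₀ ^ (m₀ - 1) θ_E ∈ D(A, δ)`. Expanding it in a homogeneous basis of `D(A, δ)` and applying the
result to `α₀` shows that some basis element `θ j` of degree `m₀` sends `α₀` to a nonzero scalar
multiple of `α₀ ^ m₀`. Subtracting multiples of `θ j` from the other basis elements makes them kill
`α₀`, so that they lie in `D(A)`; replacing `θ j` by `θ_E` then gives a homogeneous basis of `D(A)`
with exponents `{1, e_2, ..., e_ℓ}`. -/

namespace MvPolynomial

variable {σ R : Type*} [CommSemiring R] {g q r : MvPolynomial σ R} {a b : ℕ}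

theorem homogeneousComponent_add_mul_of_isHomogeneous (hq : q.IsHomogeneous a) (k : ℕ) :
    homogeneousComponent (k + a) (g * q) = homogeneousComponent k g * q := by
  let := gradedAlgebra (σ := σ) (R := R)
  have h :=
    DirectSum.coe_decompose_mul_add_of_right_mem (homogeneousSubmodule σ R) (a := g) (i := k) hq
  rwa [DirectSum.decompose, Equiv.coe_fn_mk, decomposition.decompose'_apply,
    decomposition.decompose'_apply] at h

variable [NoZeroDivisors R]

theorem homogeneousComponent_eq_zero_of_isHomogeneous_mul (hq : q.IsHomogeneous a) (hq0 : q ≠ 0)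
    (h : (g * q).IsHomogeneous b) {k : ℕ} (hk : k + a ≠ b) : homogeneousComponent k g = 0 := by
  have hcomp := homogeneousComponent_add_mul_of_isHomogeneous (g := g) hq k
  rw [homogeneousComponent_of_mem h, if_neg hk] at hcomp
  exact (mul_eq_zero.mp hcomp.symm).resolve_right hq0

theorem isHomogeneous_mul_of_isHomogeneous_mul (hq : q.IsHomogeneous a) (hq0 : q ≠ 0)
    (h : (g * q).IsHomogeneous b) (hr : r.IsHomogeneous a) : (g * r).IsHomogeneous b := by
  rw [← sum_homogeneousComponent g, Finset.sum_mul]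
  refine IsHomogeneous.sum _ _ _ fun k _ => ?_
  by_cases hk : k + a = b
  · exact hk ▸ (homogeneousComponent_isHomogeneous k g).mul hr
  · rw [homogeneousComponent_eq_zero_of_isHomogeneous_mul hq hq0 h hk, zero_mul]
    exact isHomogeneous_zero _ _ _

theorem eq_C_of_isHomogeneous_mul_of_coeff_zero_ne_zero (hq : q.IsHomogeneous a) (hq0 : q ≠ 0)
    (h : (g * q).IsHomogeneous b) (hg : coeff 0 g ≠ 0) : a = b ∧ g = C (coeff 0 g) := by
  have hab : a = b := by
    by_contra hne
    apply hg
    simpa [homogeneousComponent_zero] using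
      homogeneousComponent_eq_zero_of_isHomogeneous_mul hq hq0 h (k := 0) (by omega)
  refine ⟨hab, ?_⟩
  conv_lhs => rw [← sum_homogeneousComponent g]
  rw [Finset.sum_eq_single 0
    (fun k _ hk => homogeneousComponent_eq_zero_of_isHomogeneous_mul hq hq0 h (by omega))
    (by simp), homogeneousComponent_zero]

end MvPolynomial

section Bases

variable {R M ι : Type*} [CommRing R] [AddCommGroup M] [Module R M]

theorem span_range_sub_smul_self (v : ι → M) {j : ι} {c : ι → R} (hc : c j = 0) :
    Submodule.span R (Set.range fun i => v i - c i • v j) = Submodule.span R (Set.range v) := by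
  have hj : v j - c j • v j = v j := by rw [hc, zero_smul, sub_zero]
  apply le_antisymm <;> rw [Submodule.span_le] <;> rintro _ ⟨i, rfl⟩
  · exact sub_mem (Submodule.subset_span ⟨i, rfl⟩)
      (Submodule.smul_mem _ _ (Submodule.subset_span ⟨j, rfl⟩))
  · have hvj : v j ∈ Submodule.span R (Set.range fun i => v i - c i • v j) :=
      Submodule.subset_span ⟨j, hj⟩
    simpa using add_mem (Submodule.subset_span ⟨i, rfl⟩ :
      v i - c i • v j ∈ Submodule.span R (Set.range fun i => v i - c i • v j))
      (Submodule.smul_mem _ (c i) hvj)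

variable [Fintype ι] [DecidableEq ι]

theorem LinearIndependent.sub_smul_self {v : ι → M} (hv : LinearIndependent R v) {j : ι}
    {c : ι → R} (hc : c j = 0) : LinearIndependent R fun i => v i - c i • v j := by
  refine Fintype.linearIndependent_iff.mpr fun b hb => ?_
  have hcoef := Fintype.linearIndependent_iff.mp hv
    (fun i => b i - if i = j then ∑ k, b k * c k else 0) (by
      simp only [sub_smul, Finset.sum_sub_distrib, ite_smul, zero_smul, Finset.sum_ite_eq',
        Finset.mem_univ, if_true, Finset.sum_smul, ← smul_smul]
      simpa [smul_sub, Finset.sum_sub_distrib] using hb)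
  have hoff : ∀ i ≠ j, b i = 0 := fun i hi => by simpa [hi] using hcoef i
  have hsum : ∑ k, b k * c k = 0 :=
    Finset.sum_eq_zero fun k _ => by
      by_cases hk : k = j
      · rw [hk, hc, mul_zero]
      · rw [hoff k hk, zero_mul]
  intro i
  by_cases hi : i = j
  · simpa [hi, hsum] using hcoef j
  · exact hoff i hi

theorem sum_smul_update_of_eq_zero (v : ι → M) {j : ι} (x : M) {b : ι → R} (hb : b j = 0) :
    ∑ i, b i • Function.update v j x i = ∑ i, b i • v i :=
  Finset.sum_congr rfl fun i _ => by
    by_cases hi : i = j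
    · rw [hi, hb, zero_smul, zero_smul]
    · rw [Function.update_of_ne hi]

end Bases

noncomputable section Derivations

variable {K : Type*} [Field K] {N : ℕ}

def eulerDer (N : ℕ) (K : Type*) [Field K] : MvDer N K := fun i => X i

abbrev concentratedMult (α₀ : MvPolynomial (Fin N) K) (m : ℕ) : MvPolynomial (Fin N) K → ℕ :=
  fun α => if α = α₀ then m else 1

theorem derAppL_apply (f : MvPolynomial (Fin N) K) (θ : MvDer N K) :
    derAppL f θ = ∑ i, θ i * pderiv i f := rfl

theorem derAppL_eulerDer {α : MvPolynomial (Fin N) K} (hα : α.IsHomogeneous 1) :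
    derAppL α (eulerDer N K) = α := by
  simpa [derAppL_apply, eulerDer] using hα.sum_X_mul_pderiv

theorem isHomogDer_eulerDer : IsHomogDer (eulerDer N K) 1 := fun i => isHomogeneous_X K i

theorem IsHomogDer.derAppL {θ : MvDer N K} {d : ℕ} (hθ : IsHomogDer θ d)
    {α : MvPolynomial (Fin N) K} (hα : α.IsHomogeneous 1) : (derAppL α θ).IsHomogeneous d :=
  IsHomogeneous.sum _ _ _ fun i _ => by simpa using (hθ i).mul (hα.pderiv (i := i))

theorem mem_Dmod_iff {A : Finset (MvPolynomial (Fin N) K)} {μ : MvPolynomial (Fin N) K → ℕ}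
    {θ : MvDer N K} : θ ∈ Dmod A μ ↔ ∀ α ∈ A, α ^ μ α ∣ derAppL α θ := by
  simp [Dmod, Submodule.mem_iInf, Ideal.mem_span_singleton]

theorem IsBasisOf.comp_equiv {θ : Fin N → MvDer N K}
    {D : Submodule (MvPolynomial (Fin N) K) (MvDer N K)} (hθ : IsBasisOf θ D)
    (τ : Equiv.Perm (Fin N)) : IsBasisOf (θ ∘ τ) D :=
  ⟨fun i => hθ.1 (τ i), hθ.2.1.comp τ τ.injective, by rw [EquivLike.range_comp, hθ.2.2]⟩

theorem IsBasisOf.sub_smul_self {θ : Fin N → MvDer N K}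
    {D : Submodule (MvPolynomial (Fin N) K) (MvDer N K)} (hθ : IsBasisOf θ D) {j : Fin N}
    {c : Fin N → MvPolynomial (Fin N) K} (hc : c j = 0) :
    IsBasisOf (fun i => θ i - c i • θ j) D :=
  ⟨fun i => D.sub_mem (hθ.1 i) (D.smul_mem _ (hθ.1 j)), hθ.2.1.sub_smul_self hc,
    by rw [span_range_sub_smul_self θ hc, hθ.2.2]⟩

variable {A : Finset (MvPolynomial (Fin N) K)} {α₀ : MvPolynomial (Fin N) K} {m : ℕ}

theorem eulerDer_mem_Dmod_one (hA : ∀ α ∈ A, α.IsHomogeneous 1) :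
    eulerDer N K ∈ Dmod A fun _ => 1 :=
  mem_Dmod_iff.mpr fun α hα => by rw [derAppL_eulerDer (hA α hα), pow_one]

theorem pow_smul_eulerDer_mem_Dmod (hA : ∀ α ∈ A, α.IsHomogeneous 1) (hm : 1 ≤ m) :
    α₀ ^ (m - 1) • eulerDer N K ∈ Dmod A (concentratedMult α₀ m) := by
  refine mem_Dmod_iff.mpr fun α hα => ?_
  rw [map_smul, derAppL_eulerDer (hA α hα), smul_eq_mul, concentratedMult]
  split_ifs with h
  · rw [h, ← pow_succ, Nat.sub_add_cancel hm]
  · rw [pow_one]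
    exact dvd_mul_left α _

theorem mem_Dmod_concentratedMult_iff {θ : MvDer N K} (hθ : derAppL α₀ θ = 0) :
    θ ∈ Dmod A (concentratedMult α₀ m) ↔ θ ∈ Dmod A fun _ => 1 := by
  simp only [mem_Dmod_iff]
  refine forall₂_congr fun α _ => ?_
  by_cases h : α = α₀
  · subst h; simp [hθ]
  · simp [h]

theorem dvd_derAppL_of_mem_Dmod_concentratedMult (hα₀ : α₀ ∈ A) {θ : MvDer N K}
    (hθ : θ ∈ Dmod A (concentratedMult α₀ m)) : α₀ ^ m ∣ derAppL α₀ θ := by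
  simpa using mem_Dmod_iff.mp hθ α₀ hα₀

theorem derAppL_sum_smul_of_eq_zero {θ : Fin N → MvDer N K} {j : Fin N}
    (hoff : ∀ i ≠ j, derAppL α₀ (θ i) = 0) (b : Fin N → MvPolynomial (Fin N) K) :
    derAppL α₀ (∑ i, b i • θ i) = b j * derAppL α₀ (θ j) := by
  rw [map_sum, Finset.sum_eq_single j (fun i _ hi => by rw [map_smul, hoff i hi, smul_zero])
    (by simp), map_smul, smul_eq_mul]

/-- The derivations of `D(A)` killing `α₀` lie in `D(A, δ)`, and every element of `D(A)` is one of
them plus a multiple of the Euler derivation. -/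
theorem IsBasisOf.update_eulerDer (hA : ∀ α ∈ A, α.IsHomogeneous 1) (hα₀ : α₀ ∈ A)
    (hα₀0 : α₀ ≠ 0) {θ : Fin N → MvDer N K} (hθ : IsBasisOf θ (Dmod A (concentratedMult α₀ m)))
    {j : Fin N} (hj : derAppL α₀ (θ j) ≠ 0) (hoff : ∀ i ≠ j, derAppL α₀ (θ i) = 0) :
    IsBasisOf (Function.update θ j (eulerDer N K)) (Dmod A fun _ => 1) := by
  have hα₀E := derAppL_eulerDer (hA α₀ hα₀)
  have hmem : ∀ i, Function.update θ j (eulerDer N K) i ∈ Dmod A fun _ => 1 := fun i => by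
    by_cases hi : i = j
    · rw [hi, Function.update_self]
      exact eulerDer_mem_Dmod_one hA
    · rw [Function.update_of_ne hi]
      exact (mem_Dmod_concentratedMult_iff (hoff i hi)).mp (hθ.1 i)
  have hoffE : ∀ i ≠ j, derAppL α₀ (Function.update θ j (eulerDer N K) i) = 0 := fun i hi => by
    rw [Function.update_of_ne hi, hoff i hi]
  refine ⟨hmem, Fintype.linearIndependent_iff.mpr fun b hb i => ?_, le_antisymm ?_ ?_⟩
  · have hbj : b j = 0 := by
      have h := congrArg (derAppL α₀) hb
      rw [derAppL_sum_smul_of_eq_zero hoffE, Function.update_self, hα₀E, map_zero] at h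
      exact (mul_eq_zero.mp h).resolve_right hα₀0
    rw [sum_smul_update_of_eq_zero θ _ hbj] at hb
    exact Fintype.linearIndependent_iff.mp hθ.2.1 b hb i
  · exact Submodule.span_le.mpr (Set.range_subset_iff.mpr hmem)
  · intro φ hφ
    obtain ⟨h, hh⟩ : α₀ ∣ derAppL α₀ φ := by simpa using mem_Dmod_iff.mp hφ α₀ hα₀
    have hψ : derAppL α₀ (φ - h • eulerDer N K) = 0 := by
      rw [map_sub, map_smul, hα₀E, hh, smul_eq_mul, mul_comm, sub_self]
    have hψmem : φ - h • eulerDer N K ∈ Submodule.span (MvPolynomial (Fin N) K) (Set.range θ) := by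
      rw [hθ.2.2, mem_Dmod_concentratedMult_iff hψ]
      exact sub_mem hφ (Submodule.smul_mem _ _ (eulerDer_mem_Dmod_one hA))
    obtain ⟨a, ha⟩ := (Submodule.mem_span_range_iff_exists_fun _).mp hψmem
    have haj : a j = 0 := by
      have h := congrArg (derAppL α₀) ha
      rw [derAppL_sum_smul_of_eq_zero hoff, hψ] at h
      exact (mul_eq_zero.mp h).resolve_right hj
    rw [← sub_add_cancel φ (h • eulerDer N K), ← ha, ← sum_smul_update_of_eq_zero θ _ haj]
    refine add_mem (Submodule.sum_mem _ fun i _ => Submodule.smul_mem _ _ ?_)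
      (Submodule.smul_mem _ _ (Submodule.subset_span ⟨j, Function.update_self _ _ _⟩))
    exact Submodule.subset_span ⟨i, rfl⟩

/-- Writing `θ i (α₀) = α₀ ^ m * g i` and `α₀ ^ (m - 1) θ_E = ∑ f i θ i`, we get `∑ f i g i = 1`, so
some `g j` has a nonzero constant term; being homogeneous, it is a nonzero constant. -/
theorem exists_derAppL_eq_C_mul_pow {θ : Fin N → MvDer N K} {d : Fin N → ℕ}
    (hA : ∀ α ∈ A, α.IsHomogeneous 1) (hα₀ : α₀ ∈ A) (hα₀0 : α₀ ≠ 0) (hm : 1 ≤ m)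
    (hθ : IsBasisOf θ (Dmod A (concentratedMult α₀ m)))
    (hhom : ∀ i, IsHomogDer (θ i) (d i)) :
    ∃ j c, c ≠ 0 ∧ d j = m ∧ derAppL α₀ (θ j) = C c * α₀ ^ m := by
  choose g hg using fun i => dvd_derAppL_of_mem_Dmod_concentratedMult hα₀ (hθ.1 i)
  obtain ⟨f, hf⟩ := (Submodule.mem_span_range_iff_exists_fun _).mp
    (hθ.2.2 ▸ pow_smul_eulerDer_mem_Dmod hA hm)
  have hsum : ∑ i, f i * g i = 1 := by
    have h := congrArg (derAppL α₀) hf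
    rw [map_smul, derAppL_eulerDer (hA α₀ hα₀), smul_eq_mul, ← pow_succ,
      Nat.sub_add_cancel hm, map_sum] at h
    simp only [map_smul, hg, smul_eq_mul, mul_left_comm (f _), ← Finset.mul_sum] at h
    exact mul_left_cancel₀ (pow_ne_zero m hα₀0) (h.trans (mul_one _).symm)
  obtain ⟨j, -, hj⟩ : ∃ j ∈ Finset.univ, constantCoeff (f j * g j) ≠ 0 :=
    Finset.exists_ne_zero_of_sum_ne_zero (by rw [← map_sum, hsum, map_one]; exact one_ne_zero)
  have hcoeff : coeff 0 (g j) ≠ 0 :=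
    right_ne_zero_of_mul ((map_mul constantCoeff _ _).symm.trans_ne hj)
  have hprod : (g j * α₀ ^ m).IsHomogeneous (d j) := by
    rw [mul_comm, ← hg j]
    exact (hhom j).derAppL (hA α₀ hα₀)
  obtain ⟨hdj, hgj⟩ := eq_C_of_isHomogeneous_mul_of_coeff_zero_ne_zero
    (by simpa using (hA α₀ hα₀).pow m) (pow_ne_zero m hα₀0) hprod hcoeff
  exact ⟨j, coeff 0 (g j), hcoeff, hdj.symm, by rw [hg j, mul_comm, ← hgj]⟩

theorem exists_isBasisOf_derAppL_eq_zero_of_ne {θ : Fin N → MvDer N K} {d : Fin N → ℕ}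
    (hA : ∀ α ∈ A, α.IsHomogeneous 1) (hα₀ : α₀ ∈ A) (hα₀0 : α₀ ≠ 0) (hm : 1 ≤ m)
    (hθ : IsBasisOf θ (Dmod A (concentratedMult α₀ m)))
    (hhom : ∀ i, IsHomogDer (θ i) (d i)) :
    ∃ j θ', d j = m ∧ IsBasisOf θ' (Dmod A (concentratedMult α₀ m)) ∧
      (∀ i, IsHomogDer (θ' i) (d i)) ∧ derAppL α₀ (θ' j) ≠ 0 ∧
      ∀ i ≠ j, derAppL α₀ (θ' i) = 0 := by
  obtain ⟨j, c, hc, hdj, hθj⟩ := exists_derAppL_eq_C_mul_pow hA hα₀ hα₀0 hm hθ hhom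
  choose g hg using fun i => dvd_derAppL_of_mem_Dmod_concentratedMult hα₀ (hθ.1 i)
  set a : Fin N → MvPolynomial (Fin N) K := fun i => if i = j then 0 else C c⁻¹ * g i
  have haj : a j = 0 := if_pos rfl
  have hai : ∀ i ≠ j, a i = C c⁻¹ * g i := fun i hi => if_neg hi
  have hCc : C c⁻¹ * C c = (1 : MvPolynomial (Fin N) K) := by rw [← C_mul, inv_mul_cancel₀ hc, C_1]
  refine ⟨j, fun i => θ i - a i • θ j, hdj, hθ.sub_smul_self haj, fun i k => ?_, ?_, fun i hi => ?_⟩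
  · by_cases hi : i = j
    · simpa [hi, haj] using hhom j k
    · have hprod : (g i * α₀ ^ m).IsHomogeneous (d i) := by
        rw [mul_comm, ← hg i]
        exact (hhom i).derAppL (hA α₀ hα₀)
      have hgθ := isHomogeneous_mul_of_isHomogeneous_mul (by simpa using (hA α₀ hα₀).pow m)
        (pow_ne_zero m hα₀0) hprod (hdj ▸ hhom j k)
      simpa [hai i hi, mul_assoc] using (hhom i k).sub (hgθ.C_mul c⁻¹)
  · show derAppL α₀ (θ j - a j • θ j) ≠ 0
    rw [haj, zero_smul, sub_zero, hθj]
    exact mul_ne_zero (C_ne_zero.mpr hc) (pow_ne_zero m hα₀0)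
  · rw [map_sub, map_smul, hθj, hg i, smul_eq_mul, hai i hi]
    linear_combination (-(g i * α₀ ^ m)) * hCc

end Derivations

theorem concentrated_multiplicity_free_converse_general
    {K : Type*} [Field K] {n : ℕ}
    (A : Finset (MvPolynomial (Fin (n + 1)) K))
    (hforms : ∀ α ∈ A, α.IsHomogeneous 1 ∧ α ≠ 0)
    (α₀ : MvPolynomial (Fin (n + 1)) K) (hα₀ : α₀ ∈ A)
    (m₀ : ℕ) (hm₀ : 1 ≤ m₀)
    (e : Fin (n + 1) → ℕ)
    (hfree : FreeWithExps (Dmod A fun α => if α = α₀ then m₀ else 1)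
      (fun i => if i = 0 then m₀ else e i)) :
    FreeWithExps (Dmod A fun _ => 1) (fun i => if i = 0 then 1 else e i) := by
  obtain ⟨θ, hθ, hhom⟩ := hfree
  have hA : ∀ α ∈ A, α.IsHomogeneous 1 := fun α hα => (hforms α hα).1
  have hα₀0 := (hforms α₀ hα₀).2
  obtain ⟨j, θ', hdj, hθ', hhom', hj, hoff⟩ :=
    exists_isBasisOf_derAppL_eq_zero_of_ne hA hα₀ hα₀0 hm₀ hθ hhom
  refine ⟨Function.update θ' j (eulerDer _ K) ∘ Equiv.swap 0 j,
    (hθ'.update_eulerDer hA hα₀ hα₀0 hj hoff).comp_equiv _, fun i => ?_⟩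
  rcases eq_or_ne i 0 with rfl | hi0
  · simpa using isHomogDer_eulerDer
  · have hτi : Equiv.swap 0 j i ≠ j := by
      simpa [Equiv.swap_apply_eq_iff] using hi0
    have hdeg : (if Equiv.swap 0 j i = 0 then m₀ else e (Equiv.swap 0 j i)) = e i := by
      rcases eq_or_ne i j with rfl | hij
      · simpa [hi0, eq_comm] using hdj
      · simp [Equiv.swap_apply_of_ne_of_ne hi0 hij, hi0]
    simpa [Function.update_of_ne hτi, hdeg, hi0] using hhom' (Equiv.swap 0 j i)

/-- Converse: if `(A, δ)` is free with exponents `{m₀, e_2, ..., e_ℓ}` for the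
multiplicity `δ` concentrated at `H₀` with value `m₀`, then the simple
arrangement `A` is free with exponents `{1, e_2, ..., e_ℓ}`. -/
theorem concentrated_multiplicity_free_converse
    {K : Type*} [Field K] {n : ℕ}
    (A : Finset (MvPolynomial (Fin (n + 1)) K))
    (hforms : ∀ α ∈ A, α.IsHomogeneous 1 ∧ α ≠ 0)
    (hdist : ∀ α ∈ A, ∀ β ∈ A, kerV α = kerV β → α = β)
    (α₀ : MvPolynomial (Fin (n + 1)) K) (hα₀ : α₀ ∈ A)
    (m₀ : ℕ) (hm₀ : 1 ≤ m₀)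
    (e : Fin (n + 1) → ℕ)
    (hfree : FreeWithExps (Dmod A fun α => if α = α₀ then m₀ else 1)
      (fun i => if i = 0 then m₀ else e i)) :
    FreeWithExps (Dmod A fun _ => 1) (fun i => if i = 0 then 1 else e i) :=
  concentrated_multiplicity_free_converse_general A hforms α₀ hα₀ m₀ hm₀ e hfree
end

section
/- Let r ≥ 2 and consider the rank-2 multiarrangement in ℂ^2 with defining polynomial Q = x_2^{r+1} x_3^{r+1} (x_2^r − x_3^r). Then this multiarrangement is free with exponents {r+1, 2r+1}. -/
open MvPolynomial

open scoped Classical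

/-!
With `θ_k = x^k ∂_x + y^k ∂_y`, the derivations `θ_(r+1)` and `θ_(2r+1)` lie in `D(A, μ)`:
the conditions at `x` and `y` are clear, and `x - ζ^j y` divides `x^k - ζ^j y^k` because
`ζ^(jk) = ζ^j` for `k ≡ 1 (mod r)`. Their coefficient determinant `x^(r+1) y^(r+1) (y^r - x^r)`
is nonzero, so they are independent. Conversely, write `θ ∈ D(A, μ)` as
`x^(r+1) p ∂_x + y^(r+1) q ∂_y`. Modulo `x - ζ^j y` we have `x^(r+1) ≡ ζ^j y^(r+1)`, so the
condition at `x - ζ^j y` says exactly that `x - ζ^j y` divides `p - q`. These `r` lines are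
pairwise non-associate primes with product `x^r - y^r`, so `p - q = w (x^r - y^r)`, and then
`θ = (p - w x^r) θ_(r+1) + w θ_(2r+1)`.
-/

namespace MvPolynomial

variable {σ R : Type*} [CommRing R]

theorem X_sub_C_mul_X_dvd_pow_sub (i j : σ) (c : R) (k : ℕ) :
    X i - C c * X j ∣ X i ^ k - C (c ^ k) * X j ^ k := by
  rw [map_pow, ← mul_pow]
  exact sub_dvd_pow_sub_pow _ _ k

variable {i j : σ}

theorem not_X_sub_C_mul_X_dvd_C_mul_X_pow (hij : i ≠ j) {c : R} (hc : c ≠ 0) (m : ℕ) :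
    ¬ X i - C c * X j ∣ C c * X j ^ m := by
  rintro ⟨w, hw⟩
  simpa [hij.symm, hc] using congrArg (eval fun k => if k = i then c else 1) hw

theorem not_X_sub_C_mul_X_dvd_X_sub_C_mul_X (hij : i ≠ j) {c d : R} (hcd : c ≠ d) :
    ¬ X i - C c * X j ∣ X i - C d * X j := by
  rintro ⟨w, hw⟩
  simpa [hij.symm, sub_eq_zero, hcd] using congrArg (eval fun k => if k = i then c else 1) hw

noncomputable def shearAlgEquiv (hij : i ≠ j) (c : R) :
    MvPolynomial σ R ≃ₐ[R] MvPolynomial σ R :=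
  AlgEquiv.ofAlgHom (aeval (Function.update X i (X i - C c * X j)))
    (aeval (Function.update X i (X i + C c * X j)))
    (algHom_ext fun k => by by_cases hk : k = i <;> simp [hk, hij.symm])
    (algHom_ext fun k => by by_cases hk : k = i <;> simp [hk, hij.symm])

theorem prime_X_sub_C_mul_X [IsDomain R] (hij : i ≠ j) (c : R) : Prime (X i - C c * X j) := by
  have h : shearAlgEquiv hij c (X i) = X i - C c * X j := by simp [shearAlgEquiv]
  rw [← h]
  exact (MulEquiv.prime_iff (shearAlgEquiv hij c).toMulEquiv).mpr X_prime

theorem X_sub_C_mul_X_dvd_X_pow_mul_sub_iff [IsDomain R] (hij : i ≠ j) {c : R} (hc : c ≠ 0)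
    {k : ℕ} (hck : c ^ k = c) (p q : MvPolynomial σ R) :
    X i - C c * X j ∣ X i ^ k * p - C c * (X j ^ k * q) ↔ X i - C c * X j ∣ p - q := by
  have h : X i ^ k * p - C c * (X j ^ k * q) =
      (X i ^ k - C (c ^ k) * X j ^ k) * p + C c * X j ^ k * (p - q) := by
    rw [hck]; ring
  rw [h, dvd_add_right ((X_sub_C_mul_X_dvd_pow_sub i j c k).mul_right p),
    (prime_X_sub_C_mul_X hij c).dvd_mul, or_iff_right (not_X_sub_C_mul_X_dvd_C_mul_X_pow hij hc k)]

end MvPolynomial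

namespace IsPrimitiveRoot

variable {R : Type*} [CommRing R] {ζ : R} {n : ℕ}

theorem injOn_pow_range (h : IsPrimitiveRoot ζ n) :
    Set.InjOn (ζ ^ ·) (Finset.range n) :=
  fun _ ha _ hb => h.pow_inj (Finset.mem_range.mp ha) (Finset.mem_range.mp hb)

theorem image_pow_range_eq_nthRootsFinset [IsDomain R] (hn : 0 < n) (h : IsPrimitiveRoot ζ n) :
    (Finset.range n).image (ζ ^ ·) = Polynomial.nthRootsFinset n (1 : R) := by
  refine Finset.eq_of_subset_of_card_le (fun x hx => ?_) ?_
  · obtain ⟨k, -, rfl⟩ := Finset.mem_image.mp hx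
    rw [Polynomial.mem_nthRootsFinset hn, pow_right_comm, h.pow_eq_one, one_pow]
  · rw [h.card_nthRootsFinset, Finset.card_image_of_injOn h.injOn_pow_range, Finset.card_range]

theorem pow_sub_pow_eq_prod_range [IsDomain R] (hn : 0 < n) (h : IsPrimitiveRoot ζ n) (x y : R) :
    x ^ n - y ^ n = ∏ k ∈ Finset.range n, (x - ζ ^ k * y) := by
  rw [h.pow_sub_pow_eq_prod_sub_mul x y hn, ← h.image_pow_range_eq_nthRootsFinset hn,
    Finset.prod_image h.injOn_pow_range]

end IsPrimitiveRoot

namespace MvPolynomial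

variable {σ R : Type*} [CommRing R] [IsDomain R] [UniqueFactorizationMonoid R] {i j : σ}

theorem X_pow_sub_X_pow_dvd_of_forall_dvd (hij : i ≠ j) {ζ : R} {n : ℕ} (hn : 0 < n)
    (hζ : IsPrimitiveRoot ζ n) {f : MvPolynomial σ R}
    (hf : ∀ k < n, X i - C (ζ ^ k) * X j ∣ f) : X i ^ n - X j ^ n ∣ f := by
  rw [(hζ.map_of_injective (C_injective σ R)).pow_sub_pow_eq_prod_range hn]
  simp_rw [← map_pow]
  refine Finset.prod_dvd_of_isRelPrime (fun k hk l hl hkl => ?_)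
    fun k hk => hf k (Finset.mem_range.mp hk)
  exact (prime_X_sub_C_mul_X hij _).irreducible.isRelPrime_iff_not_dvd.mpr
    (not_X_sub_C_mul_X_dvd_X_sub_C_mul_X hij (hkl ∘ hζ.injOn_pow_range hk hl))

end MvPolynomial

section Derivations

variable {K : Type*} [Field K] {n : ℕ}

theorem mem_DmodP_iff {P : Finset (MvPolynomial (Fin n) K × ℕ)} {θ : MvDer n K} :
    θ ∈ DmodP P ↔ ∀ p ∈ P, p.1 ^ p.2 ∣ derAppL p.1 θ := by
  simp only [DmodP, Submodule.mem_iInf, Submodule.mem_comap, Ideal.mem_span_singleton]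

theorem derAppL_X (i : Fin n) (θ : MvDer n K) : derAppL (X i) θ = θ i := by
  simp [derAppL, pderiv_X, Pi.single_apply]

theorem derAppL_X_sub_C_mul_X (i j : Fin n) (c : K) (θ : MvDer n K) :
    derAppL (X i - C c * X j) θ = θ i - C c * θ j := by
  simp [derAppL, pderiv_X, Pi.single_apply, mul_sub, Finset.sum_sub_distrib, mul_comm]

variable (K) in
noncomputable def powDer (n k : ℕ) : MvDer n K := fun i => X i ^ k

theorem isHomogDer_powDer (n k : ℕ) : IsHomogDer (powDer K n k) k :=
  fun i => isHomogeneous_X_pow i k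

theorem linearIndependent_powDer {a b : ℕ} (hab : a ≠ b) :
    LinearIndependent (MvPolynomial (Fin 2) K) ![powDer K 2 a, powDer K 2 b] := by
  have hne : X 0 ^ a * X 1 ^ b ≠ (X 1 ^ a * X 0 ^ b : MvPolynomial (Fin 2) K) := by
    intro h
    simp only [X_pow_eq_monomial, monomial_mul, mul_one, monomial_left_inj one_ne_zero] at h
    simpa using hab (by simpa using DFunLike.congr_fun h 0)
  refine Matrix.linearIndependent_rows_of_det_ne_zero
    (A := Matrix.of ![powDer K 2 a, powDer K 2 b]) ?_
  rw [Matrix.det_fin_two]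
  exact sub_ne_zero.mpr hne

end Derivations

section RootsOfUnityMultiarrangement

variable {K : Type*} [Field K] {r : ℕ} {ζ : K}

noncomputable def rootsOfUnityMultiarr (r : ℕ) (ζ : K) :
    Finset (MvPolynomial (Fin 2) K × ℕ) :=
  {(X 0, r + 1), (X 1, r + 1)} ∪ (Finset.range r).image fun j => (X 0 - C (ζ ^ j) * X 1, 1)

theorem mem_DmodP_rootsOfUnityMultiarr_iff {θ : MvDer 2 K} :
    θ ∈ DmodP (rootsOfUnityMultiarr r ζ) ↔
      X 0 ^ (r + 1) ∣ θ 0 ∧ X 1 ^ (r + 1) ∣ θ 1 ∧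
        ∀ j < r, X 0 - C (ζ ^ j) * X 1 ∣ θ 0 - C (ζ ^ j) * θ 1 := by
  simp only [mem_DmodP_iff, rootsOfUnityMultiarr, Finset.mem_union, Finset.mem_insert,
    Finset.mem_singleton, Finset.mem_image, Finset.mem_range, or_imp, forall_and, forall_eq,
    forall_exists_index, and_imp, forall_apply_eq_imp_iff₂, derAppL_X, derAppL_X_sub_C_mul_X,
    pow_one, and_assoc]

theorem powDer_mem_DmodP_rootsOfUnityMultiarr (hζ : ζ ^ r = 1) {m : ℕ} (hm : m ≠ 0) :
    powDer K 2 (m * r + 1) ∈ DmodP (rootsOfUnityMultiarr r ζ) := by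
  have hle : r + 1 ≤ m * r + 1 :=
    Nat.succ_le_succ (Nat.le_mul_of_pos_left r (Nat.pos_of_ne_zero hm))
  refine mem_DmodP_rootsOfUnityMultiarr_iff.mpr
    ⟨pow_dvd_pow _ hle, pow_dvd_pow _ hle, fun j _ => ?_⟩
  have hpow : (ζ ^ j) ^ (m * r + 1) = ζ ^ j := by
    have hζj : (ζ ^ j) ^ r = 1 := by rw [pow_right_comm, hζ, one_pow]
    rw [pow_succ, mul_comm m, pow_mul, hζj, one_pow, one_mul]
  simpa [powDer, hpow] using X_sub_C_mul_X_dvd_pow_sub (0 : Fin 2) 1 (ζ ^ j) (m * r + 1)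

theorem mem_span_powDer_of_mem_DmodP (hr : 0 < r) (hζ : IsPrimitiveRoot ζ r) {θ : MvDer 2 K}
    (hθ : θ ∈ DmodP (rootsOfUnityMultiarr r ζ)) :
    θ ∈ Submodule.span (MvPolynomial (Fin 2) K)
      (Set.range ![powDer K 2 (r + 1), powDer K 2 (2 * r + 1)]) := by
  obtain ⟨⟨p, hp⟩, ⟨q, hq⟩, hL⟩ := mem_DmodP_rootsOfUnityMultiarr_iff.mp hθ
  have hζj : ∀ j, (ζ ^ j) ^ (r + 1) = ζ ^ j := fun j => by
    rw [pow_succ, pow_right_comm, hζ.pow_eq_one, one_pow, one_mul]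
  obtain ⟨w, hw⟩ : X 0 ^ r - X 1 ^ r ∣ p - q :=
    X_pow_sub_X_pow_dvd_of_forall_dvd Fin.zero_ne_one hr hζ fun j hj =>
      (X_sub_C_mul_X_dvd_X_pow_mul_sub_iff Fin.zero_ne_one (pow_ne_zero j (hζ.ne_zero hr.ne'))
        (hζj j) p q).mp (by rw [← hp, ← hq]; exact hL j hj)
  have hθ_eq : θ = (p - w * X 0 ^ r) • powDer K 2 (r + 1) + w • powDer K 2 (2 * r + 1) := by
    refine funext (Fin.forall_fin_two.mpr ⟨?_, ?_⟩)
    · show θ 0 = (p - w * X 0 ^ r) * X 0 ^ (r + 1) + w * X 0 ^ (2 * r + 1)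
      linear_combination hp
    · show θ 1 = (p - w * X 0 ^ r) * X 1 ^ (r + 1) + w * X 1 ^ (2 * r + 1)
      linear_combination hq - X 1 ^ (r + 1) * hw
  rw [hθ_eq]
  exact add_mem (Submodule.smul_mem _ _ (Submodule.subset_span ⟨0, rfl⟩))
    (Submodule.smul_mem _ _ (Submodule.subset_span ⟨1, rfl⟩))

theorem freeWithExps_rootsOfUnityMultiarr (hr : 0 < r) (hζ : IsPrimitiveRoot ζ r) :
    FreeWithExps (DmodP (rootsOfUnityMultiarr r ζ)) ![r + 1, 2 * r + 1] := by
  have hmem : ∀ i, ![powDer K 2 (r + 1), powDer K 2 (2 * r + 1)] i ∈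
      DmodP (rootsOfUnityMultiarr r ζ) := Fin.forall_fin_two.mpr
    ⟨by simpa using powDer_mem_DmodP_rootsOfUnityMultiarr hζ.pow_eq_one one_ne_zero,
      powDer_mem_DmodP_rootsOfUnityMultiarr hζ.pow_eq_one two_ne_zero⟩
  refine ⟨_, ⟨hmem, linearIndependent_powDer (by omega), le_antisymm ?_ ?_⟩,
    Fin.forall_fin_two.mpr ⟨isHomogDer_powDer 2 _, isHomogDer_powDer 2 _⟩⟩
  · exact Submodule.span_le.mpr (Set.range_subset_iff.mpr hmem)
  · exact fun _ => mem_span_powDer_of_mem_DmodP hr hζ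

end RootsOfUnityMultiarrangement

/-- The rank-2 multiarrangement in `ℂ²` with defining polynomial
`x₂^(r+1) x₃^(r+1) (x₂^r - x₃^r)` is free with exponents `{r+1, 2r+1}`. -/
theorem Gr13_ziegler_restriction_free
    (r : ℕ) (hr : 2 ≤ r) (ζ : ℂ) (hζ : IsPrimitiveRoot ζ r)
    (P : Finset (MvPolynomial (Fin 2) ℂ × ℕ))
    (hP : P =
      {((MvPolynomial.X 0 : MvPolynomial (Fin 2) ℂ), r + 1),
       ((MvPolynomial.X 1 : MvPolynomial (Fin 2) ℂ), r + 1)} ∪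
      ((Finset.range r).image fun j =>
        ((MvPolynomial.X 0 - MvPolynomial.C (ζ ^ j) * MvPolynomial.X 1 :
          MvPolynomial (Fin 2) ℂ), 1))) :
    FreeWithExps (DmodP P) ![r + 1, 2 * r + 1] := by
  subst hP
  exact freeWithExps_rootsOfUnityMultiarr (by omega) hζ
end
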